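/- For any n-element monomial matching: if ω is an antisymmetric 2n×2n matrix over a commutative ring, then pf(ω) satisfies pf(AᵀωA) = det(A)·pf(ω) for any 2n×2n matrix A. -/

import Mathlib

open Matrix BigOperators
open scoped Classical

/-- First element of the `i`-th pair in `Fin (2*n)`. -/
def pairFst {n : ℕ} (i : Fin n) : Fin (2*n) := ⟨2*(i:ℕ), by have := i.isLt; omega⟩

/-- Second element of the `i`-th pair in `Fin (2*n)`. -/
def pairSnd {n : ℕ} (i : Fin n) : Fin (2*n) := ⟨2*(i:ℕ)+1, by have := i.isLt; omega⟩

/-- A permutation of `Fin (2*n)` encoding a perfect matching in normal form. -/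
def IsMatching {n : ℕ} (σ : Equiv.Perm (Fin (2*n))) : Prop :=
  (∀ i : Fin n, σ (pairFst i) < σ (pairSnd i)) ∧
  (∀ i j : Fin n, i < j → σ (pairFst i) < σ (pairFst j))

/-- The Pfaffian of a `2n × 2n` matrix, as the signed sum over perfect matchings. -/
noncomputable def pf {R : Type*} [CommRing R] {n : ℕ}
    (A : Matrix (Fin (2*n)) (Fin (2*n)) R) : R :=
  ∑ σ ∈ Finset.univ.filter (fun σ : Equiv.Perm (Fin (2*n)) => IsMatching σ),
    (Equiv.Perm.sign σ : ℤ) • ∏ i : Fin n, A (σ (pairFst i)) (σ (pairSnd i))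

namespace PfAux
variable {n : ℕ}
def pe (n : ℕ) : Fin n × Fin 2 ≃ Fin (2*n) where
  toFun x := ⟨2 * x.1.val + x.2.val, by have := x.1.isLt; have := x.2.isLt; omega⟩
  invFun k := (⟨k.val / 2, by have := k.isLt; omega⟩, ⟨k.val % 2, by omega⟩)
  left_inv := by rintro ⟨i, t⟩; have := i.isLt; have := t.isLt
                 refine Prod.ext (Fin.ext ?_) (Fin.ext ?_) <;> simp <;> omega
  right_inv := by intro k; have := k.isLt; refine Fin.ext ?_; simp; omega

@[simp] lemma pe_zero (i : Fin n) : pe n (i, 0) = pairFst i := by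
  refine Fin.ext ?_; simp [pe, pairFst]
@[simp] lemma pe_one (i : Fin n) : pe n (i, 1) = pairSnd i := by
  refine Fin.ext ?_; simp [pe, pairSnd]
@[simp] lemma pe_symm_pairFst (i : Fin n) : (pe n).symm (pairFst i) = (i, 0) := by
  rw [Equiv.symm_apply_eq, pe_zero]
@[simp] lemma pe_symm_pairSnd (i : Fin n) : (pe n).symm (pairSnd i) = (i, 1) := by
  rw [Equiv.symm_apply_eq, pe_one]

/-- The within-pair swap involution, as a permutation of `Fin (2*n)`. -/
def sw (n : ℕ) : Equiv.Perm (Fin (2*n)) :=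
  (pe n).permCongr (Equiv.prodCongrRight fun _ : Fin n => Equiv.swap (0 : Fin 2) 1)

@[simp] lemma sw_pairFst (i : Fin n) : sw n (pairFst i) = pairSnd i := by
  simp [sw, Equiv.permCongr_apply, Equiv.prodCongrRight]

@[simp] lemma sw_pairSnd (i : Fin n) : sw n (pairSnd i) = pairFst i := by
  simp [sw, Equiv.permCongr_apply, Equiv.prodCongrRight]

lemma pair_cases (k : Fin (2*n)) : (∃ i, k = pairFst i) ∨ (∃ i, k = pairSnd i) := by
  rcases (by omega : ((pe n).symm k).2 = 0 ∨ ((pe n).symm k).2 = 1) with h | h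
  · left; exact ⟨((pe n).symm k).1, by
      conv_lhs => rw [← (pe n).apply_symm_apply k]
      rw [← pe_zero ((pe n).symm k).1, ← h]⟩
  · right; exact ⟨((pe n).symm k).1, by
      conv_lhs => rw [← (pe n).apply_symm_apply k]
      rw [← pe_one ((pe n).symm k).1, ← h]⟩

lemma sw_sw (k : Fin (2*n)) : sw n (sw n k) = k := by
  rcases pair_cases k with ⟨i, rfl⟩ | ⟨i, rfl⟩ <;> simp

lemma pairFst_ne_pairSnd (i j : Fin n) : pairFst i ≠ pairSnd j := by
  intro h; have := congrArg Fin.val h; simp [pairFst, pairSnd] at this; omega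

lemma sw_ne (k : Fin (2*n)) : sw n k ≠ k := by
  rcases pair_cases k with ⟨i, rfl⟩ | ⟨i, rfl⟩ <;> simp
  · exact fun h => pairFst_ne_pairSnd i i h.symm
  · exact pairFst_ne_pairSnd i i

lemma sw_mul_sw : sw n * sw n = 1 := by
  refine Equiv.ext fun k => ?_
  simpa [Equiv.Perm.mul_apply] using sw_sw k


lemma pairFst_injective : Function.Injective (pairFst (n := n)) := by
  intro i j h
  have := congrArg Fin.val h
  simp [pairFst] at this
  exact Fin.ext this

lemma pairSnd_injective : Function.Injective (pairSnd (n := n)) := by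
  intro i j h
  have := congrArg Fin.val h
  simp [pairSnd] at this
  exact Fin.ext this

/-- Split a product over `Fin (2*n)` into pairs. -/
lemma prod_pair {R : Type*} [CommRing R] (h : Fin (2*n) → R) :
    ∏ k, h k = ∏ i : Fin n, (h (pairFst i) * h (pairSnd i)) := by
  rw [← Equiv.prod_comp (pe n) h, Fintype.prod_prod_type]
  refine Finset.prod_congr rfl fun i _ => ?_
  rw [Fin.prod_univ_two]
  simp

section Expansion
variable {R : Type*} [CommRing R]

/-- Flatten a family of pairs into a function on `Fin (2*n)`. -/
def fg (g : Fin n → Fin (2*n) × Fin (2*n)) : Fin (2*n) → Fin (2*n) :=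
  fun k => if k.val % 2 = 0 then (g ⟨k.val/2, by have := k.isLt; omega⟩).1
           else (g ⟨k.val/2, by have := k.isLt; omega⟩).2

lemma fg_pairFst (g : Fin n → Fin (2*n) × Fin (2*n)) (i : Fin n) :
    fg g (pairFst i) = (g i).1 := by
  have h1 : (2*(i:ℕ)) % 2 = 0 := by omega
  have h2 : (⟨2*(i:ℕ)/2, by have := i.isLt; omega⟩ : Fin n) = i := Fin.ext (by simp)
  simp only [fg, pairFst, h1, if_true, h2]

lemma fg_pairSnd (g : Fin n → Fin (2*n) × Fin (2*n)) (i : Fin n) :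
    fg g (pairSnd i) = (g i).2 := by
  have h1 : ¬ ((2*(i:ℕ)+1) % 2 = 0) := by omega
  have h2 : (⟨(2*(i:ℕ)+1)/2, by have := i.isLt; omega⟩ : Fin n) = i := by
    apply Fin.ext
    show (2*(i:ℕ)+1)/2 = (i:ℕ)
    omega
  simp only [fg, pairSnd, h1, if_false, h2]

/-- The "full" Pfaffian sum over all permutations. -/
noncomputable def PF (ω : Matrix (Fin (2*n)) (Fin (2*n)) R) : R :=
  ∑ τ : Equiv.Perm (Fin (2*n)),
    (Equiv.Perm.sign τ : ℤ) • ∏ i : Fin n, ω (τ (pairFst i)) (τ (pairSnd i))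

theorem PF_conj (ω A : Matrix (Fin (2*n)) (Fin (2*n)) R) :
    PF (Aᵀ * ω * A) = A.det * PF ω := by
  classical
  have entry : ∀ a b, (Aᵀ * ω * A) a b
      = ∑ p : Fin (2*n) × Fin (2*n), A p.1 a * ω p.1 p.2 * A p.2 b := by
    intro a b
    rw [Fintype.sum_prod_type]
    simp only [Matrix.mul_apply, Matrix.transpose_apply, Finset.sum_mul]
    rw [Finset.sum_comm]
  have expand : ∀ τ : Equiv.Perm (Fin (2*n)),
      ∏ i : Fin n, (Aᵀ * ω * A) (τ (pairFst i)) (τ (pairSnd i))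
      = ∑ g ∈ Fintype.piFinset (fun _ : Fin n =>
          (Finset.univ : Finset (Fin (2*n) × Fin (2*n)))),
          (∏ i : Fin n, ω (fg g (pairFst i)) (fg g (pairSnd i))) * ∏ k, A (fg g k) (τ k) := by
    intro τ
    simp_rw [entry]
    rw [Finset.prod_univ_sum]
    refine Finset.sum_congr rfl fun g _ => ?_
    rw [prod_pair (fun k => A (fg g k) (τ k)), ← Finset.prod_mul_distrib]
    refine Finset.prod_congr rfl fun i _ => ?_
    rw [fg_pairFst, fg_pairSnd]
    ring
  have step1 : PF (Aᵀ * ω * A)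
      = ∑ g ∈ Fintype.piFinset (fun _ : Fin n =>
          (Finset.univ : Finset (Fin (2*n) × Fin (2*n)))),
          (∏ i : Fin n, ω (fg g (pairFst i)) (fg g (pairSnd i)))
            * (A.submatrix (fg g) id).det := by
    unfold PF
    simp_rw [expand, Finset.smul_sum]
    rw [Finset.sum_comm]
    refine Finset.sum_congr rfl fun g _ => ?_
    rw [← Matrix.det_transpose (A.submatrix (fg g) id), Matrix.det_apply, Finset.mul_sum]
    refine Finset.sum_congr rfl fun τ _ => ?_
    rw [mul_smul_comm, Units.smul_def]
    congr 2
  have step2 : PF (Aᵀ * ω * A)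
      = ∑ g ∈ (Fintype.piFinset (fun _ : Fin n =>
          (Finset.univ : Finset (Fin (2*n) × Fin (2*n))))).filter
            (fun g => Function.Injective (fg g)),
          (∏ i : Fin n, ω (fg g (pairFst i)) (fg g (pairSnd i)))
            * (A.submatrix (fg g) id).det := by
    rw [step1, ← Finset.sum_filter_add_sum_filter_not _ (fun g => Function.Injective (fg g))]
    have hz : ∀ g ∈ (Fintype.piFinset (fun _ : Fin n =>
        (Finset.univ : Finset (Fin (2*n) × Fin (2*n))))).filter
          (fun g => ¬ Function.Injective (fg g)),
        (∏ i : Fin n, ω (fg g (pairFst i)) (fg g (pairSnd i)))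
          * (A.submatrix (fg g) id).det = 0 := by
      intro g hg
      rw [Finset.mem_filter] at hg
      obtain ⟨a, b, hab, hne⟩ := Function.not_injective_iff.mp hg.2
      have : (A.submatrix (fg g) id).det = 0 := by
        refine Matrix.det_zero_of_row_eq hne ?_
        funext j
        simp [Matrix.submatrix_apply, hab]
      rw [this, mul_zero]
    rw [Finset.sum_eq_zero hz, add_zero]
  rw [step2]
  have step3 : ∑ g ∈ (Fintype.piFinset (fun _ : Fin n =>
          (Finset.univ : Finset (Fin (2*n) × Fin (2*n))))).filter
            (fun g => Function.Injective (fg g)),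
          (∏ i : Fin n, ω (fg g (pairFst i)) (fg g (pairSnd i)))
            * (A.submatrix (fg g) id).det
      = ∑ τ : Equiv.Perm (Fin (2*n)),
          (∏ i : Fin n, ω (τ (pairFst i)) (τ (pairSnd i)))
            * ((Equiv.Perm.sign τ : ℤ) * A.det) := by
    refine Finset.sum_bij (fun g hg => Equiv.ofBijective (fg g)
      (Finite.injective_iff_bijective.mp (Finset.mem_filter.mp hg).2)) ?_ ?_ ?_ ?_
    · intro g hg; exact Finset.mem_univ _
    · intro g1 hg1 g2 hg2 h
      have hfg : fg g1 = fg g2 := by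
        funext k
        exact congrFun (congrArg (fun (e : Equiv.Perm (Fin (2*n))) => (e : Fin (2*n) → Fin (2*n))) h) k
      funext i
      refine Prod.ext ?_ ?_
      · rw [← fg_pairFst g1 i, ← fg_pairFst g2 i, hfg]
      · rw [← fg_pairSnd g1 i, ← fg_pairSnd g2 i, hfg]
    · intro τ _
      refine ⟨fun i => (τ (pairFst i), τ (pairSnd i)), ?_, ?_⟩
      · have hfg : fg (fun i => (τ (pairFst i), τ (pairSnd i))) = ⇑τ := by
          funext k
          rcases pair_cases k with ⟨i, rfl⟩ | ⟨i, rfl⟩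
          · rw [fg_pairFst]
          · rw [fg_pairSnd]
        refine Finset.mem_filter.mpr ⟨by simp, ?_⟩
        rw [hfg]; exact τ.injective
      · have hfg : fg (fun i => (τ (pairFst i), τ (pairSnd i))) = ⇑τ := by
          funext k
          rcases pair_cases k with ⟨i, rfl⟩ | ⟨i, rfl⟩
          · rw [fg_pairFst]
          · rw [fg_pairSnd]
        refine Equiv.ext fun k => ?_
        exact congrFun hfg k
    · intro g hg
      have hdet : (A.submatrix (fg g) id).det
          = ((Equiv.Perm.sign (Equiv.ofBijective (fg g)
            (Finite.injective_iff_bijective.mp (Finset.mem_filter.mp hg).2)) : ℤ) : R) * A.det := by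
        exact_mod_cast Matrix.det_permute (Equiv.ofBijective (fg g)
            (Finite.injective_iff_bijective.mp (Finset.mem_filter.mp hg).2)) A
      rw [hdet]
      rfl
  rw [step3]
  unfold PF
  rw [Finset.mul_sum]
  refine Finset.sum_congr rfl fun τ _ => ?_
  rw [zsmul_eq_mul]
  ring

end Expansion

section Coset

theorem _root_.Equiv.Perm.apply_inv_self {α : Type*} (f : Equiv.Perm α) (x : α) : f (f⁻¹ x) = x :=
  f.apply_symm_apply x

theorem _root_.Equiv.Perm.inv_apply_self {α : Type*} (f : Equiv.Perm α) (x : α) : f⁻¹ (f x) = x :=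
  f.symm_apply_apply x

def pidx (k : Fin (2*n)) : Fin n := ((pe n).symm k).1

@[simp] lemma pidx_pairFst (i : Fin n) : pidx (pairFst i) = i := by simp [pidx]
@[simp] lemma pidx_pairSnd (i : Fin n) : pidx (pairSnd i) = i := by simp [pidx]

lemma pairFst_pidx_or (k : Fin (2*n)) : pairFst (pidx k) = k ∨ pairSnd (pidx k) = k := by
  rcases pair_cases k with ⟨i, rfl⟩ | ⟨i, rfl⟩ <;> simp

variable {ρ : Equiv.Perm (Fin (2*n))}

lemma inv_comm (hρ : ∀ x, ρ (sw n x) = sw n (ρ x)) :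
    ∀ x, ρ⁻¹ (sw n x) = sw n (ρ⁻¹ x) := by
  intro x
  apply ρ.injective
  rw [Equiv.Perm.apply_inv_self, hρ, Equiv.Perm.apply_inv_self]

/-- The permutation induced on pair indices by an element of the centralizer of `sw`. -/
def pbar (hρ : ∀ x, ρ (sw n x) = sw n (ρ x)) : Equiv.Perm (Fin n) where
  toFun i := pidx (ρ (pairFst i))
  invFun i := pidx (ρ⁻¹ (pairFst i))
  left_inv := by
    intro i
    show pidx (ρ⁻¹ (pairFst (pidx (ρ (pairFst i))))) = i
    rcases pairFst_pidx_or (ρ (pairFst i)) with h | h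
    · rw [h, Equiv.Perm.inv_apply_self, pidx_pairFst]
    · have h2 : pairFst (pidx (ρ (pairFst i))) = sw n (ρ (pairFst i)) := by
        rw [← h, pidx_pairSnd, sw_pairSnd]
      rw [h2, inv_comm hρ, Equiv.Perm.inv_apply_self, sw_pairFst, pidx_pairSnd]
  right_inv := by
    intro i
    show pidx (ρ (pairFst (pidx (ρ⁻¹ (pairFst i))))) = i
    rcases pairFst_pidx_or (ρ⁻¹ (pairFst i)) with h | h
    · rw [h, Equiv.Perm.apply_inv_self, pidx_pairFst]
    · have h2 : pairFst (pidx (ρ⁻¹ (pairFst i))) = sw n (ρ⁻¹ (pairFst i)) := by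
        rw [← h, pidx_pairSnd, sw_pairSnd]
      rw [h2, hρ, Equiv.Perm.apply_inv_self, sw_pairFst, pidx_pairSnd]

lemma pbar_or (hρ : ∀ x, ρ (sw n x) = sw n (ρ x)) (i : Fin n) :
    ρ (pairFst i) = pairFst (pbar hρ i) ∨ ρ (pairFst i) = pairSnd (pbar hρ i) := by
  rcases pairFst_pidx_or (ρ (pairFst i)) with h | h
  · exact Or.inl h.symm
  · exact Or.inr h.symm

lemma notbad_spec (hρ : ∀ x, ρ (sw n x) = sw n (ρ x)) (i : Fin n)
    (hb : ρ (pairFst i) = pairFst (pbar hρ i)) :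
    ρ (pairSnd i) = pairSnd (pbar hρ i) := by
  rw [← sw_pairFst i, hρ, hb, sw_pairFst]

lemma bad_spec (hρ : ∀ x, ρ (sw n x) = sw n (ρ x)) (i : Fin n)
    (hb : ρ (pairFst i) ≠ pairFst (pbar hρ i)) :
    ρ (pairFst i) = pairSnd (pbar hρ i) ∧ ρ (pairSnd i) = pairFst (pbar hρ i) := by
  have h1 : ρ (pairFst i) = pairSnd (pbar hρ i) := (pbar_or hρ i).resolve_left hb
  refine ⟨h1, ?_⟩
  rw [← sw_pairFst i, hρ, h1, sw_pairSnd]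

lemma sign_centralizer (hρ : ∀ x, ρ (sw n x) = sw n (ρ x)) :
    Equiv.Perm.sign ρ
      = ∏ i : Fin n, (if ρ (pairFst i) = pairFst (pbar hρ i) then 1 else (-1 : ℤˣ)) := by
  have hdecomp : ρ = (pe n).permCongr
      ((Equiv.prodCongrLeft fun _ : Fin 2 => pbar hρ) *
       (Equiv.prodCongrRight fun i : Fin n =>
          if ρ (pairFst i) = pairFst (pbar hρ i) then 1 else Equiv.swap (0 : Fin 2) 1)) := by
    refine Equiv.ext fun k => ?_
    rcases pair_cases k with ⟨i, rfl⟩ | ⟨i, rfl⟩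
    · rw [Equiv.permCongr_apply, pe_symm_pairFst, Equiv.Perm.mul_apply,
        Equiv.prodCongrRight_apply, Equiv.prodCongrLeft_apply]
      by_cases hb : ρ (pairFst i) = pairFst (pbar hρ i)
      · simp only [hb, if_pos]
        simp [hb]
      · simp only [hb, if_neg, if_false]
        rw [(bad_spec hρ i hb).1]
        simp [Equiv.swap_apply_left]
    · rw [Equiv.permCongr_apply, pe_symm_pairSnd, Equiv.Perm.mul_apply,
        Equiv.prodCongrRight_apply, Equiv.prodCongrLeft_apply]
      by_cases hb : ρ (pairFst i) = pairFst (pbar hρ i)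
      · simp only [hb, if_pos]
        rw [notbad_spec hρ i hb]
        simp
      · simp only [hb, if_neg, if_false]
        rw [(bad_spec hρ i hb).2]
        simp [Equiv.swap_apply_right]
  calc Equiv.Perm.sign ρ
      = Equiv.Perm.sign ((pe n).permCongr
        ((Equiv.prodCongrLeft fun _ : Fin 2 => pbar hρ) *
         (Equiv.prodCongrRight fun i : Fin n =>
            if ρ (pairFst i) = pairFst (pbar hρ i) then 1 else Equiv.swap (0 : Fin 2) 1))) := by
        rw [← hdecomp]
    _ = _ := by
        rw [Equiv.Perm.sign_permCongr, _root_.map_mul, Equiv.Perm.sign_prodCongrLeft,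
          Equiv.Perm.sign_prodCongrRight]
        have h1 : ∏ _t : Fin 2, Equiv.Perm.sign (pbar hρ) = 1 := by
          rw [Finset.prod_const]
          simp [Int.units_sq]
        rw [h1, one_mul]
        refine Finset.prod_congr rfl fun i _ => ?_
        by_cases hb : ρ (pairFst i) = pairFst (pbar hρ i) <;>
          simp [hb, Equiv.Perm.sign_swap (by decide : (0 : Fin 2) ≠ 1)]

variable {R : Type*} [CommRing R]

/-- The summand of `PF` is invariant under right multiplication by the centralizer of `sw`. -/
theorem G_coset (ω : Matrix (Fin (2*n)) (Fin (2*n)) R) (hskew : ωᵀ = -ω)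
    (hρ : ∀ x, ρ (sw n x) = sw n (ρ x)) (σ : Equiv.Perm (Fin (2*n))) :
    (Equiv.Perm.sign (σ * ρ) : ℤ) • ∏ i : Fin n, ω ((σ * ρ) (pairFst i)) ((σ * ρ) (pairSnd i))
      = (Equiv.Perm.sign σ : ℤ) • ∏ i : Fin n, ω (σ (pairFst i)) (σ (pairSnd i)) := by
  have hsk : ∀ a b, ω b a = - ω a b := by
    intro a b
    have := congrFun (congrFun hskew a) b
    simpa [Matrix.transpose_apply] using this
  have hprod : ∏ i : Fin n, ω ((σ * ρ) (pairFst i)) ((σ * ρ) (pairSnd i))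
      = (∏ i : Fin n, (if ρ (pairFst i) = pairFst (pbar hρ i) then (1:R) else -1))
        * ∏ i : Fin n, ω (σ (pairFst i)) (σ (pairSnd i)) := by
    rw [← Equiv.prod_comp (pbar hρ) (fun j => ω (σ (pairFst j)) (σ (pairSnd j))),
      ← Finset.prod_mul_distrib]
    refine Finset.prod_congr rfl fun i _ => ?_
    by_cases hb : ρ (pairFst i) = pairFst (pbar hρ i)
    · rw [if_pos hb, one_mul, Equiv.Perm.mul_apply, Equiv.Perm.mul_apply, hb,
        notbad_spec hρ i hb]
    · rw [if_neg hb, Equiv.Perm.mul_apply, Equiv.Perm.mul_apply,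
        (bad_spec hρ i hb).1, (bad_spec hρ i hb).2, hsk]
      ring
  have hsign : ((Equiv.Perm.sign ρ : ℤ) : R)
      * (∏ i : Fin n, (if ρ (pairFst i) = pairFst (pbar hρ i) then (1:R) else -1)) = 1 := by
    rw [sign_centralizer hρ]
    push_cast [apply_ite (fun (u : ℤˣ) => ((u : ℤ) : R))]
    rw [← Finset.prod_mul_distrib]
    rw [Finset.prod_congr rfl (fun i _ => ?_), Finset.prod_const_one]
    by_cases hb : ρ (pairFst i) = pairFst (pbar hρ i) <;> simp [hb]
  rw [hprod, _root_.map_mul, zsmul_eq_mul, zsmul_eq_mul]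
  push_cast
  linear_combination (((Equiv.Perm.sign σ : ℤ) : R)
    * ∏ i : Fin n, ω (σ (pairFst i)) (σ (pairSnd i))) * hsign

end Coset

section NormalForm

variable (τ : Equiv.Perm (Fin (2*n)))

/-- The fixed-point-free involution conjugate to `sw` by `τ`. -/
def mm : Equiv.Perm (Fin (2*n)) := τ * sw n * τ⁻¹

lemma mm_apply (x : Fin (2*n)) : mm τ x = τ (sw n (τ⁻¹ x)) := rfl

lemma mm_mm (x : Fin (2*n)) : mm τ (mm τ x) = x := by
  simp [mm_apply, sw_sw]

lemma mm_ne (x : Fin (2*n)) : mm τ x ≠ x := by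
  intro h
  have h2 : τ (sw n (τ⁻¹ x)) = τ (τ⁻¹ x) := by
    rw [← mm_apply, h, Equiv.Perm.apply_inv_self]
  exact sw_ne (τ⁻¹ x) (τ.injective h2)

/-- The set of smaller elements of the pairs of `mm τ`. -/
def Lset : Finset (Fin (2*n)) := Finset.univ.filter (fun x => x < mm τ x)

lemma card_Lset : (Lset τ).card = n := by
  classical
  have hbij : (Lset τ).card = (Finset.univ.filter (fun x => mm τ x < x)).card := by
    refine Finset.card_bij (fun x _ => mm τ x) ?_ ?_ ?_
    · intro x hx
      simp only [Lset, Finset.mem_filter] at hx ⊢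
      exact ⟨Finset.mem_univ _, by rw [mm_mm]; exact hx.2⟩
    · intro x hx y hy h
      exact (mm τ).injective h
    · intro y hy
      rw [Finset.mem_filter] at hy
      exact ⟨mm τ y, Finset.mem_filter.mpr ⟨Finset.mem_univ _, by rw [mm_mm]; exact hy.2⟩,
        mm_mm τ y⟩
  have hneg : (Finset.univ.filter (fun x => mm τ x < x))
      = (Finset.univ.filter (fun x => ¬ x < mm τ x)) := by
    refine Finset.filter_congr fun x _ => ?_
    constructor
    · exact fun h => asymm h
    · intro h
      rcases lt_or_gt_of_ne (mm_ne τ x) with h1 | h1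
      · exact h1
      · exact absurd h1 h
  have htot := Finset.card_filter_add_card_filter_not
    (s := (Finset.univ : Finset (Fin (2*n)))) (p := fun x => x < mm τ x)
  rw [Finset.card_univ, Fintype.card_fin] at htot
  have : (Lset τ).card + (Lset τ).card = 2 * n := by
    rw (occs := .pos [2]) [hbij]
    rw [hneg]
    exact htot
  omega

/-- Increasing enumeration of `Lset`. -/
noncomputable def emb : Fin n ↪o Fin (2*n) := (Lset τ).orderEmbOfFin (card_Lset τ)

lemma emb_mem (i : Fin n) : emb τ i ∈ Lset τ := Finset.orderEmbOfFin_mem _ _ i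

lemma emb_lt (i : Fin n) : emb τ i < mm τ (emb τ i) :=
  (Finset.mem_filter.mp (emb_mem τ i)).2

/-- Normal form of the pairing of `τ`, as a function. -/
noncomputable def normFun : Fin (2*n) → Fin (2*n) :=
  fg (fun i => (emb τ i, mm τ (emb τ i)))

lemma normFun_pairFst (i : Fin n) : normFun τ (pairFst i) = emb τ i := fg_pairFst _ i

lemma normFun_pairSnd (i : Fin n) : normFun τ (pairSnd i) = mm τ (emb τ i) := fg_pairSnd _ i

lemma normFun_inj : Function.Injective (normFun τ) := by
  intro k k' h
  rcases pair_cases k with ⟨i, rfl⟩ | ⟨i, rfl⟩ <;>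
    rcases pair_cases k' with ⟨j, rfl⟩ | ⟨j, rfl⟩
  · rw [normFun_pairFst, normFun_pairFst] at h
    rw [(emb τ).injective h]
  · rw [normFun_pairFst, normFun_pairSnd] at h
    exfalso
    have h2 : emb τ j < emb τ i := by
      have h2' := emb_lt τ j
      rw [← h] at h2'
      exact h2'
    have h4 : mm τ (emb τ i) = emb τ j := by rw [h, mm_mm]
    have h3 := emb_lt τ i
    rw [h4] at h3
    exact absurd h3 (asymm h2)
  · rw [normFun_pairSnd, normFun_pairFst] at h
    exfalso
    have h2 : emb τ i < emb τ j := by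
      have h2' := emb_lt τ i
      rw [h] at h2'
      exact h2'
    have h4 : mm τ (emb τ j) = emb τ i := by rw [← h, mm_mm]
    have h3 := emb_lt τ j
    rw [h4] at h3
    exact absurd h3 (asymm h2)
  · rw [normFun_pairSnd, normFun_pairSnd] at h
    rw [(emb τ).injective ((mm τ).injective h)]

/-- The normal-form matching in the coset of `τ`. -/
noncomputable def norm : Equiv.Perm (Fin (2*n)) :=
  Equiv.ofBijective (normFun τ) (Finite.injective_iff_bijective.mp (normFun_inj τ))

lemma norm_pairFst (i : Fin n) : norm τ (pairFst i) = emb τ i := normFun_pairFst τ i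

lemma norm_pairSnd (i : Fin n) : norm τ (pairSnd i) = mm τ (emb τ i) := normFun_pairSnd τ i

lemma norm_isMatching : IsMatching (norm τ) := by
  constructor
  · intro i
    rw [norm_pairFst, norm_pairSnd]
    exact emb_lt τ i
  · intro i j hij
    rw [norm_pairFst, norm_pairFst]
    exact (emb τ).strictMono hij

lemma norm_conj : norm τ * sw n * (norm τ)⁻¹ = τ * sw n * τ⁻¹ := by
  have key : ∀ x, norm τ (sw n x) = mm τ (norm τ x) := by
    intro x
    rcases pair_cases x with ⟨i, rfl⟩ | ⟨i, rfl⟩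
    · rw [sw_pairFst, norm_pairSnd, norm_pairFst]
    · rw [sw_pairSnd, norm_pairFst, norm_pairSnd, mm_mm]
  refine Equiv.ext fun y => ?_
  show norm τ (sw n ((norm τ)⁻¹ y)) = mm τ y
  rw [key ((norm τ)⁻¹ y), Equiv.Perm.apply_inv_self]

theorem matching_eq_norm (σ : Equiv.Perm (Fin (2*n))) (hσ : IsMatching σ)
    (hconj : σ * sw n * σ⁻¹ = τ * sw n * τ⁻¹) : σ = norm τ := by
  have hms : ∀ x, σ (sw n x) = mm τ (σ x) := by
    intro x
    have h1 : (σ * sw n * σ⁻¹) (σ x) = (τ * sw n * τ⁻¹) (σ x) := by rw [hconj]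
    simpa [Equiv.Perm.mul_apply, mm_apply] using h1
  have hmem : ∀ i, σ (pairFst i) ∈ Lset τ := by
    intro i
    refine Finset.mem_filter.mpr ⟨Finset.mem_univ _, ?_⟩
    have h2 : mm τ (σ (pairFst i)) = σ (pairSnd i) := by
      rw [← hms (pairFst i), sw_pairFst]
    rw [h2]
    exact hσ.1 i
  have hmono : StrictMono (fun i => σ (pairFst i)) := fun i j hij => hσ.2 i j hij
  have huniq := Finset.orderEmbOfFin_unique (card_Lset τ) hmem hmono
  have hFst : ∀ i, σ (pairFst i) = norm τ (pairFst i) := by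
    intro i
    rw [norm_pairFst]
    exact congrFun huniq i
  have hSnd : ∀ i, σ (pairSnd i) = norm τ (pairSnd i) := by
    intro i
    rw [norm_pairSnd]
    have h2 : σ (pairSnd i) = mm τ (σ (pairFst i)) := by
      rw [← hms (pairFst i), sw_pairFst]
    rw [h2, hFst i, norm_pairFst]
  refine Equiv.ext fun x => ?_
  rcases pair_cases x with ⟨i, rfl⟩ | ⟨i, rfl⟩
  · exact hFst i
  · exact hSnd i

end NormalForm

section Assembly
variable {R : Type*} [CommRing R]

theorem PF_eq (ω : Matrix (Fin (2*n)) (Fin (2*n)) R) (hskew : ωᵀ = -ω) :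
    PF ω = (Finset.univ.filter
        (fun ρ : Equiv.Perm (Fin (2*n)) => ρ * sw n = sw n * ρ)).card • pf ω := by
  have key : ∑ p ∈ (Finset.univ.filter (fun σ : Equiv.Perm (Fin (2*n)) => IsMatching σ)) ×ˢ
        (Finset.univ.filter (fun ρ : Equiv.Perm (Fin (2*n)) => ρ * sw n = sw n * ρ)),
        ((Equiv.Perm.sign (p.1 * p.2) : ℤ)
          • ∏ i : Fin n, ω ((p.1 * p.2) (pairFst i)) ((p.1 * p.2) (pairSnd i)))
      = PF ω := by
    unfold PF
    refine Finset.sum_nbij' (fun p => p.1 * p.2)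
      (fun τ => (norm τ, (norm τ)⁻¹ * τ)) ?_ ?_ ?_ ?_ ?_
    · intro p _
      exact Finset.mem_univ _
    · intro τ _
      refine Finset.mem_product.mpr ⟨?_, ?_⟩
      · exact Finset.mem_filter.mpr ⟨Finset.mem_univ _, norm_isMatching τ⟩
      · refine Finset.mem_filter.mpr ⟨Finset.mem_univ _, ?_⟩
        calc ((norm τ)⁻¹ * τ) * sw n
            = (norm τ)⁻¹ * (τ * sw n * τ⁻¹) * τ := by group
          _ = (norm τ)⁻¹ * (norm τ * sw n * (norm τ)⁻¹) * τ := by rw [norm_conj τ]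
          _ = sw n * ((norm τ)⁻¹ * τ) := by group
    · intro p hp
      obtain ⟨hp1, hp2⟩ := Finset.mem_product.mp hp
      have hσM : IsMatching p.1 := (Finset.mem_filter.mp hp1).2
      have hρH : p.2 * sw n = sw n * p.2 := (Finset.mem_filter.mp hp2).2
      have hc : p.2 * sw n * p.2⁻¹ = sw n := by rw [hρH]; group
      have hconj : p.1 * sw n * p.1⁻¹ = (p.1 * p.2) * sw n * (p.1 * p.2)⁻¹ := by
        have : (p.1 * p.2) * sw n * (p.1 * p.2)⁻¹ = p.1 * (p.2 * sw n * p.2⁻¹) * p.1⁻¹ := by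
          group
        rw [this, hc]
      have h1 : p.1 = norm (p.1 * p.2) := matching_eq_norm (p.1 * p.2) p.1 hσM hconj
      refine Prod.ext ?_ ?_
      · exact h1.symm
      · show (norm (p.1 * p.2))⁻¹ * (p.1 * p.2) = p.2
        rw [← h1]
        group
    · intro τ _
      show norm τ * ((norm τ)⁻¹ * τ) = τ
      group
    · intro p _
      rfl
  rw [← key, Finset.sum_product]
  have step : ∀ σ ∈ (Finset.univ.filter
        (fun σ : Equiv.Perm (Fin (2*n)) => IsMatching σ)),
      ∑ ρ ∈ (Finset.univ.filter
        (fun ρ : Equiv.Perm (Fin (2*n)) => ρ * sw n = sw n * ρ)),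
        ((Equiv.Perm.sign (σ * ρ) : ℤ)
          • ∏ i : Fin n, ω ((σ * ρ) (pairFst i)) ((σ * ρ) (pairSnd i)))
      = (Finset.univ.filter
        (fun ρ : Equiv.Perm (Fin (2*n)) => ρ * sw n = sw n * ρ)).card
          • ((Equiv.Perm.sign σ : ℤ) • ∏ i : Fin n, ω (σ (pairFst i)) (σ (pairSnd i))) := by
    intro σ _
    rw [Finset.sum_congr rfl (fun ρ hρ => ?_), Finset.sum_const]
    have hcomm : ρ * sw n = sw n * ρ := (Finset.mem_filter.mp hρ).2
    have hpt : ∀ x, ρ (sw n x) = sw n (ρ x) := by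
      intro x
      rw [← Equiv.Perm.mul_apply, hcomm, Equiv.Perm.mul_apply]
    exact G_coset ω hskew hpt σ
  rw [Finset.sum_congr rfl step, ← Finset.smul_sum]
  rfl

theorem pf_conj_charzero [IsDomain R] [CharZero R]
    (ω A : Matrix (Fin (2*n)) (Fin (2*n)) R) (hskew : ωᵀ = -ω) :
    pf (Aᵀ * ω * A) = A.det * pf ω := by
  have hskew2 : (Aᵀ * ω * A)ᵀ = -(Aᵀ * ω * A) := by
    rw [Matrix.transpose_mul, Matrix.transpose_mul, Matrix.transpose_transpose, hskew]
    rw [Matrix.neg_mul, Matrix.mul_neg, ← Matrix.mul_assoc]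
  have h1 := PF_eq ω hskew
  have h2 := PF_eq (Aᵀ * ω * A) hskew2
  have h3 := PF_conj ω A
  set c := (Finset.univ.filter
      (fun ρ : Equiv.Perm (Fin (2*n)) => ρ * sw n = sw n * ρ)).card with hc
  have hcpos : 0 < c := by
    refine Finset.card_pos.mpr ⟨1, Finset.mem_filter.mpr ⟨Finset.mem_univ _, by group⟩⟩
  rw [h1, h2] at h3
  have h4 : (c : R) * pf (Aᵀ * ω * A) = (c : R) * (A.det * pf ω) := by
    rw [← nsmul_eq_mul, ← nsmul_eq_mul, h3, mul_smul_comm]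
  exact mul_left_cancel₀ (Nat.cast_ne_zero.mpr hcpos.ne') h4

end Assembly

section Transfer

lemma pf_map {R S : Type*} [CommRing R] [CommRing S] (f : R →+* S)
    (M : Matrix (Fin (2*n)) (Fin (2*n)) R) : pf (M.map f) = f (pf M) := by
  unfold pf
  rw [map_sum]
  refine Finset.sum_congr rfl fun σ _ => ?_
  rw [map_zsmul]
  congr 1
  rw [map_prod]
  rfl

/-- The generic antisymmetric matrix. -/
noncomputable def genΩ (n : ℕ) : Matrix (Fin (2*n)) (Fin (2*n))
    (MvPolynomial ((Fin (2*n) × Fin (2*n)) ⊕ (Fin (2*n) × Fin (2*n))) ℤ) :=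
  fun i j => if i = j then 0 else if i < j then MvPolynomial.X (Sum.inl (i, j))
    else - MvPolynomial.X (Sum.inl (j, i))

/-- The generic matrix. -/
noncomputable def genB (n : ℕ) : Matrix (Fin (2*n)) (Fin (2*n))
    (MvPolynomial ((Fin (2*n) × Fin (2*n)) ⊕ (Fin (2*n) × Fin (2*n))) ℤ) :=
  fun i j => MvPolynomial.X (Sum.inr (i, j))

lemma genΩ_skew (n : ℕ) : (genΩ n)ᵀ = -(genΩ n) := by
  funext i j
  show genΩ n j i = -(genΩ n i j)
  rcases lt_trichotomy i j with h | h | h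
  · simp [genΩ, h, h.ne, h.ne', not_lt_of_gt h]
  · simp [genΩ, h]
  · simp [genΩ, h, h.ne, h.ne', not_lt_of_gt h]

end Transfer

end PfAux

/-- For an antisymmetric matrix `ω` and any matrix `A`, `pf(Aᵀ ω A) = det A · pf ω`. -/
theorem pf_conj {R : Type*} [CommRing R] {n : ℕ}
    (ω A : Matrix (Fin (2*n)) (Fin (2*n)) R)
    (hskew : ωᵀ = -ω) (hdiag : ∀ i, ω i i = 0) :
    pf (Aᵀ * ω * A) = A.det * pf ω := by
  classical
  have key := PfAux.pf_conj_charzero (PfAux.genΩ n) (PfAux.genB n) (PfAux.genΩ_skew n)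
  let φ : MvPolynomial ((Fin (2*n) × Fin (2*n)) ⊕ (Fin (2*n) × Fin (2*n))) ℤ →+* R :=
    MvPolynomial.eval₂Hom (Int.castRingHom R)
      (Sum.elim (fun p => ω p.1 p.2) (fun p => A p.1 p.2))
  have hB : (PfAux.genB n).map φ = A := by
    funext i j
    show φ (MvPolynomial.X (Sum.inr (i, j))) = A i j
    simp [φ]
  have hΩ : (PfAux.genΩ n).map φ = ω := by
    funext i j
    show φ (PfAux.genΩ n i j) = ω i j
    rcases lt_trichotomy i j with h | h | h
    · simp [PfAux.genΩ, h, h.ne, φ]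
    · subst h
      simp [PfAux.genΩ, hdiag, φ]
    · have hω : ω j i = -(ω i j) := by
        have := congrFun (congrFun hskew i) j
        simpa [Matrix.transpose_apply] using this
      simp [PfAux.genΩ, h, h.ne', not_lt_of_gt h, φ, hω]
  calc pf (Aᵀ * ω * A)
      = pf (((PfAux.genB n)ᵀ * PfAux.genΩ n * PfAux.genB n).map φ) := by
        rw [Matrix.map_mul, Matrix.map_mul, Matrix.transpose_map, hB, hΩ]
    _ = φ (pf ((PfAux.genB n)ᵀ * PfAux.genΩ n * PfAux.genB n)) := PfAux.pf_map φ _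
    _ = φ ((PfAux.genB n).det * pf (PfAux.genΩ n)) := by rw [key]
    _ = A.det * pf ω := by
        rw [_root_.map_mul, RingHom.map_det, RingHom.mapMatrix_apply, hB,
          ← PfAux.pf_map φ, hΩ]
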